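/- arXiv:2304.14687 — 11 statements merged into one kernel-verified Lean document; each statement's English description precedes it below -/
import Mathlib

section
/- Let W be any unitary 2×2 complex matrix and let n, m be real numbers with n² + m² = 1. Then the 4×4 block matrix D := [[n·W, i·m·I],[i·m·I, n·W†]] (where I is the 2×2 identity and W† is the conjugate transpose of W) is unitary. -/
noncomputable section
open Matrix

/-- If `W` is a unitary 2×2 complex matrix and `n² + m² = 1` (with `n, m` real), then the
Dirac-automaton block matrix `D = [[n·W, i·m·I], [i·m·I, n·W†]]` is unitary. -/
theorem dirac_block_unitary (W : Matrix (Fin 2) (Fin 2) ℂ)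
    (hW : W ∈ Matrix.unitaryGroup (Fin 2) ℂ) (n m : ℝ) (h : n ^ 2 + m ^ 2 = 1) :
    Matrix.fromBlocks
        ((n : ℂ) • W)
        ((Complex.I * (m : ℂ)) • (1 : Matrix (Fin 2) (Fin 2) ℂ))
        ((Complex.I * (m : ℂ)) • (1 : Matrix (Fin 2) (Fin 2) ℂ))
        ((n : ℂ) • Wᴴ)
      ∈ Matrix.unitaryGroup (Fin 2 ⊕ Fin 2) ℂ := by
  have h1 : Wᴴ * W = 1 := hW.1
  have h2 : W * Wᴴ = 1 := hW.2
  have hc : ((n:ℂ)^2 + (m:ℂ)^2) = 1 := by exact_mod_cast congrArg Complex.ofReal h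
  rw [Matrix.mem_unitaryGroup_iff']
  rw [star_eq_conjTranspose, fromBlocks_conjTranspose, fromBlocks_multiply]
  simp only [conjTranspose_smul, conjTranspose_one, conjTranspose_conjTranspose,
    Matrix.smul_mul, Matrix.mul_smul, Matrix.mul_one, Matrix.one_mul, smul_smul,
    h1, h2, ← fromBlocks_one, ← add_smul]
  have e1 : ((n:ℂ) * star (n:ℂ) + Complex.I * (m:ℂ) * star (Complex.I * (m:ℂ))) = 1 := by
    simp [Complex.star_def, Complex.conj_ofReal, Complex.conj_I]
    linear_combination hc - (m:ℂ)^2 * Complex.I_sq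
  have e2 : (Complex.I * (m:ℂ) * star (n:ℂ) + (n:ℂ) * star (Complex.I * (m:ℂ))) = 0 := by
    simp [Complex.star_def, Complex.conj_ofReal, Complex.conj_I]
    ring
  have e3 : ((n:ℂ) * star (Complex.I * (m:ℂ)) + Complex.I * (m:ℂ) * star (n:ℂ)) = 0 := by
    rw [add_comm]; exact e2
  have e4 : (Complex.I * (m:ℂ) * star (Complex.I * (m:ℂ)) + (n:ℂ) * star (n:ℂ)) = 1 := by
    rw [add_comm]; exact e1
  rw [e1, e2, e3, e4]; simp
end
end

section
/- For every axis j ∈ {x,y,z}, for both chiralities (±), and for every generator h ∈ S = {h₁, h₂, h₃, h₄, −h₁, −h₂, −h₃, −h₄} ⊂ ℝ³, one has R_j(h) ∈ S and σ_j · W^{(±)}_h · σ_j = W^{(±)}_{R_j(h)}, where R_j is the rotation of ℝ³ by angle π about the j-th coordinate axis. Consequently the Weyl automaton ∑_h T_h ⊗ W^{(±)}_h is invariant under the isotropy group L = {I, R(π,x), R(π,y), R(π,z)} represented by {I, iσx, iσy, iσz} on the internal degrees of freedom. -/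
noncomputable section
open Matrix

/-- The three Pauli matrices `σx, σy, σz`. -/
def pauli : Fin 3 → Matrix (Fin 2) (Fin 2) ℂ :=
  ![!![0, 1; 1, 0], !![0, -Complex.I; Complex.I, 0], !![1, 0; 0, -1]]

/-- The four BCC generators `h₁, h₂, h₃, h₄` of `ℝ³`. -/
def hgen : Fin 4 → (Fin 3 → ℝ) :=
  ![(Real.sqrt 3)⁻¹ • ![1, -1, -1], (Real.sqrt 3)⁻¹ • ![1, 1, 1],
    (Real.sqrt 3)⁻¹ • ![-1, -1, 1], (Real.sqrt 3)⁻¹ • ![-1, 1, -1]]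

/-- The signed generators: `gen i true = hᵢ` and `gen i false = -hᵢ`, so that the set
`S = {±h₁, ±h₂, ±h₃, ±h₄}` is the range of `gen`. -/
def gen : Fin 4 → Bool → (Fin 3 → ℝ) := fun i s => if s then hgen i else -hgen i

/-- `η true = η⁺ = (1+i)/4`, `η false = η⁻ = (1-i)/4`. -/
def η : Bool → ℂ := fun χ => if χ then (1 + Complex.I) / 4 else (1 - Complex.I) / 4

/-- `Wbase χ true = W^{(χ)}_{h₁}` and `Wbase χ false = W^{(χ)}_{-h₁}`, where `χ = true`
is the `+` chirality and `χ = false` the `-` chirality. -/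
def Wbase : Bool → Bool → Matrix (Fin 2) (Fin 2) ℂ := fun χ s =>
  if s then η χ • !![1, 0; 1, 0] else η (!χ) • !![0, -1; 0, 1]

/-- `Wm χ i s` is the Weyl transition matrix `W^{(χ)}_{±hᵢ}` (sign given by `s`):
the matrix for `±h₁` for `i = 0`, and its conjugation by `σx, σy, σz` for `i = 1, 2, 3`. -/
def Wm : Bool → Fin 4 → Bool → Matrix (Fin 2) (Fin 2) ℂ := fun χ i s =>
  Fin.cases (Wbase χ s) (fun j => pauli j * Wbase χ s * pauli j) i

/-- The π-rotation of `ℝ³` about the `j`-th coordinate axis: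
it fixes the `j`-th coordinate and flips the two others. -/
def Rrot : Fin 3 → (Fin 3 → ℝ) → (Fin 3 → ℝ) := fun j v i => if i = j then v i else -v i

section Aux
variable {χ s : Bool}

lemma pauli_sq : ∀ j, pauli j * pauli j = 1 := by
  intro j
  fin_cases j <;>
    · ext a b
      fin_cases a <;> fin_cases b <;>
        simp [pauli, Matrix.mul_apply, Fin.sum_univ_two, Matrix.one_apply, Complex.ext_iff]

lemma p01 : pauli 0 * pauli 1 = Complex.I • pauli 2 := by
  ext a b; fin_cases a <;> fin_cases b <;>
    simp [pauli, Matrix.mul_apply, Fin.sum_univ_two, Complex.ext_iff]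
lemma p10 : pauli 1 * pauli 0 = -(Complex.I • pauli 2) := by
  ext a b; fin_cases a <;> fin_cases b <;>
    simp [pauli, Matrix.mul_apply, Fin.sum_univ_two, Complex.ext_iff]
lemma p12 : pauli 1 * pauli 2 = Complex.I • pauli 0 := by
  ext a b; fin_cases a <;> fin_cases b <;>
    simp [pauli, Matrix.mul_apply, Fin.sum_univ_two, Complex.ext_iff]
lemma p21 : pauli 2 * pauli 1 = -(Complex.I • pauli 0) := by
  ext a b; fin_cases a <;> fin_cases b <;>
    simp [pauli, Matrix.mul_apply, Fin.sum_univ_two, Complex.ext_iff]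
lemma p20 : pauli 2 * pauli 0 = Complex.I • pauli 1 := by
  ext a b; fin_cases a <;> fin_cases b <;>
    simp [pauli, Matrix.mul_apply, Fin.sum_univ_two, Complex.ext_iff]
lemma p02 : pauli 0 * pauli 2 = -(Complex.I • pauli 1) := by
  ext a b; fin_cases a <;> fin_cases b <;>
    simp [pauli, Matrix.mul_apply, Fin.sum_univ_two, Complex.ext_iff]

lemma Wm0 : Wm χ 0 s = Wbase χ s := rfl
lemma Wm1 : Wm χ 1 s = pauli 0 * Wbase χ s * pauli 0 := rfl
lemma Wm2 : Wm χ 2 s = pauli 1 * Wbase χ s * pauli 1 := rfl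
lemma Wm3 : Wm χ 3 s = pauli 2 * Wbase χ s * pauli 2 := rfl

lemma key (W P Q R : Matrix (Fin 2) (Fin 2) ℂ) (c : ℂ) (hc : c * c = -1)
    (h1 : P * Q = c • R) (h2 : Q * P = -(c • R)) :
    P * (Q * W * Q) * P = R * W * R := by
  have h : P * (Q * W * Q) * P = (P * Q) * W * (Q * P) := by noncomm_ring
  rw [h, h1, h2]
  simp [Matrix.smul_mul, Matrix.mul_smul, smul_smul, hc]

lemma key2 (W P : Matrix (Fin 2) (Fin 2) ℂ) (hP : P * P = 1) :
    P * (P * W * P) * P = W := by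
  have h : P * (P * W * P) * P = (P * P) * W * (P * P) := by noncomm_ring
  rw [h, hP]; simp

lemma vkey (s : Bool) (j : Fin 3) (a b : Fin 4) (h : Rrot j (hgen a) = hgen b) :
    Rrot j (gen a s) = gen b s := by
  funext k
  have hk := congrFun h k
  cases s <;> simp only [gen, if_true, if_false, Bool.false_eq_true, Rrot, Pi.neg_apply] at hk ⊢ <;>
    [skip; exact hk]
  split <;> simp_all

lemma vx1 : Rrot 0 (hgen 0) = hgen 1 := by
  funext k; fin_cases k <;> simp [Rrot, hgen, Matrix.vecHead, Matrix.vecTail, Pi.smul_apply, smul_eq_mul]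
lemma vx2 : Rrot 0 (hgen 1) = hgen 0 := by
  funext k; fin_cases k <;> simp [Rrot, hgen, Matrix.vecHead, Matrix.vecTail, Pi.smul_apply, smul_eq_mul]
lemma vx3 : Rrot 0 (hgen 2) = hgen 3 := by
  funext k; fin_cases k <;> simp [Rrot, hgen, Matrix.vecHead, Matrix.vecTail, Pi.smul_apply, smul_eq_mul]
lemma vx4 : Rrot 0 (hgen 3) = hgen 2 := by
  funext k; fin_cases k <;> simp [Rrot, hgen, Matrix.vecHead, Matrix.vecTail, Pi.smul_apply, smul_eq_mul]
lemma vy1 : Rrot 1 (hgen 0) = hgen 2 := by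
  funext k; fin_cases k <;> simp [Rrot, hgen, Matrix.vecHead, Matrix.vecTail, Pi.smul_apply, smul_eq_mul]
lemma vy2 : Rrot 1 (hgen 1) = hgen 3 := by
  funext k; fin_cases k <;> simp [Rrot, hgen, Matrix.vecHead, Matrix.vecTail, Pi.smul_apply, smul_eq_mul]
lemma vy3 : Rrot 1 (hgen 2) = hgen 0 := by
  funext k; fin_cases k <;> simp [Rrot, hgen, Matrix.vecHead, Matrix.vecTail, Pi.smul_apply, smul_eq_mul]
lemma vy4 : Rrot 1 (hgen 3) = hgen 1 := by
  funext k; fin_cases k <;> simp [Rrot, hgen, Matrix.vecHead, Matrix.vecTail, Pi.smul_apply, smul_eq_mul]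
lemma vz1 : Rrot 2 (hgen 0) = hgen 3 := by
  funext k; fin_cases k <;> simp [Rrot, hgen, Matrix.vecHead, Matrix.vecTail, Pi.smul_apply, smul_eq_mul]
lemma vz2 : Rrot 2 (hgen 1) = hgen 2 := by
  funext k; fin_cases k <;> simp [Rrot, hgen, Matrix.vecHead, Matrix.vecTail, Pi.smul_apply, smul_eq_mul]
lemma vz3 : Rrot 2 (hgen 2) = hgen 1 := by
  funext k; fin_cases k <;> simp [Rrot, hgen, Matrix.vecHead, Matrix.vecTail, Pi.smul_apply, smul_eq_mul]
lemma vz4 : Rrot 2 (hgen 3) = hgen 0 := by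
  funext k; fin_cases k <;> simp [Rrot, hgen, Matrix.vecHead, Matrix.vecTail, Pi.smul_apply, smul_eq_mul]

lemma II : Complex.I * Complex.I = -1 := Complex.I_mul_I
lemma nII : (-Complex.I) * (-Complex.I) = -1 := by
  simpa using Complex.I_mul_I

end Aux



section MCase
variable {χ s : Bool}
lemma m01 : pauli 0 * Wm χ 0 s * pauli 0 = Wm χ 1 s := by rw [Wm0, Wm1]
lemma m10 : pauli 0 * Wm χ 1 s * pauli 0 = Wm χ 0 s := by
  rw [Wm1, Wm0]; exact key2 _ _ (pauli_sq 0)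
lemma m23 : pauli 0 * Wm χ 2 s * pauli 0 = Wm χ 3 s := by
  rw [Wm2, Wm3]; exact key _ _ _ _ _ II p01 p10
lemma m32 : pauli 0 * Wm χ 3 s * pauli 0 = Wm χ 2 s := by
  rw [Wm3, Wm2]
  exact key _ _ _ _ (-Complex.I) nII (by rw [p02]; module) (by rw [p20]; module)
lemma n02 : pauli 1 * Wm χ 0 s * pauli 1 = Wm χ 2 s := by rw [Wm0, Wm2]
lemma n13 : pauli 1 * Wm χ 1 s * pauli 1 = Wm χ 3 s := by
  rw [Wm1, Wm3]
  exact key _ _ _ _ (-Complex.I) nII (by rw [p10]; module) (by rw [p01]; module)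
lemma n20 : pauli 1 * Wm χ 2 s * pauli 1 = Wm χ 0 s := by
  rw [Wm2, Wm0]; exact key2 _ _ (pauli_sq 1)
lemma n31 : pauli 1 * Wm χ 3 s * pauli 1 = Wm χ 1 s := by
  rw [Wm3, Wm1]; exact key _ _ _ _ _ II p12 p21
lemma q03 : pauli 2 * Wm χ 0 s * pauli 2 = Wm χ 3 s := by rw [Wm0, Wm3]
lemma q12 : pauli 2 * Wm χ 1 s * pauli 2 = Wm χ 2 s := by
  rw [Wm1, Wm2]; exact key _ _ _ _ _ II p20 p02
lemma q21 : pauli 2 * Wm χ 2 s * pauli 2 = Wm χ 1 s := by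
  rw [Wm2, Wm1]
  exact key _ _ _ _ (-Complex.I) nII (by rw [p21]; module) (by rw [p12]; module)
lemma q30 : pauli 2 * Wm χ 3 s * pauli 2 = Wm χ 0 s := by
  rw [Wm3, Wm0]; exact key2 _ _ (pauli_sq 2)
end MCase

/-- Isotropy of the Weyl automaton: for every axis `j`, every chirality `χ` and every signed
generator `h = gen i s ∈ S`, the rotated vector `R_j(h)` is again in `S`, say `R_j(h) = gen i' s'`,
and the transition matrices satisfy the covariance relation `σ_j · W^{(χ)}_h · σ_j = W^{(χ)}_{R_j(h)}`.
Consequently the Weyl automaton `∑_h T_h ⊗ W^{(χ)}_h` is invariant under the isotropy group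
`L = {I, R(π,x), R(π,y), R(π,z)}` represented by `{I, iσx, iσy, iσz}` on the internal degrees of
freedom. -/
theorem weyl_isotropy (j : Fin 3) (χ : Bool) (i : Fin 4) (s : Bool) :
    ∃ (i' : Fin 4) (s' : Bool),
      Rrot j (gen i s) = gen i' s' ∧
      pauli j * Wm χ i s * pauli j = Wm χ i' s' := by
  fin_cases j <;> fin_cases i
  · exact ⟨1, s, vkey s 0 0 1 vx1, m01⟩
  · exact ⟨0, s, vkey s 0 1 0 vx2, m10⟩
  · exact ⟨3, s, vkey s 0 2 3 vx3, m23⟩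
  · exact ⟨2, s, vkey s 0 3 2 vx4, m32⟩
  · exact ⟨2, s, vkey s 1 0 2 vy1, n02⟩
  · exact ⟨3, s, vkey s 1 1 3 vy2, n13⟩
  · exact ⟨0, s, vkey s 1 2 0 vy3, n20⟩
  · exact ⟨1, s, vkey s 1 3 1 vy4, n31⟩
  · exact ⟨3, s, vkey s 2 0 3 vz1, q03⟩
  · exact ⟨2, s, vkey s 2 1 2 vz2, q12⟩
  · exact ⟨1, s, vkey s 2 2 1 vz3, q21⟩
  · exact ⟨0, s, vkey s 2 3 0 vz4, q30⟩
end
end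

section
/- For every λ ∈ ℂ, the matrix exponential exp(−i·O′) equals the 3×3 identity matrix if and only if √2·|λ| is an integer multiple of 2π. -/
/-!
For `λ ≠ 0` the matrix `O′` is diagonalizable with eigenvalues `0` and `±θ`, where
`θ = √2·|λ|` (so that `θ² = 2λλ̄`). Hence `exp(−i·O′)` is conjugate to
`diag(1, e^{iθ}, e^{−iθ})`, which is the identity exactly when `θ ∈ 2πℤ`.
For `λ = 0` both sides hold trivially.
-/

noncomputable section
open Matrix

/-- The interaction block `O′` associated with the coupling constant `λ`. -/
def Oprime (l : ℂ) : Matrix (Fin 3) (Fin 3) ℂ :=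
  !![0, 0, -(starRingEnd ℂ) l;
     0, 0, -(starRingEnd ℂ) l;
     -l, -l, 0]

open Complex Real ComplexConjugate

namespace Matrix

variable {m 𝔸 : Type*} [Fintype m] [DecidableEq m]

theorem exp_diagonal_eq_one_iff [NormedRing 𝔸] [NormedAlgebra ℚ 𝔸] [CompleteSpace 𝔸]
    (v : m → 𝔸) : NormedSpace.exp (diagonal v) = 1 ↔ ∀ i, NormedSpace.exp (v i) = 1 := by
  rw [exp_diagonal, diagonal_eq_one, funext_iff]
  simp only [Pi.coe_exp, Pi.one_apply]

theorem exp_eq_one_iff_of_mul_eq_mul [NormedCommRing 𝔸] [NormedAlgebra ℚ 𝔸] [CompleteSpace 𝔸]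
    {A D P : Matrix m m 𝔸} (hP : IsUnit P) (h : A * P = P * D) :
    NormedSpace.exp A = 1 ↔ NormedSpace.exp D = 1 := by
  have hdet : IsUnit P.det := (isUnit_iff_isUnit_det P).1 hP
  have hA : A = P * D * P⁻¹ := by rw [← h, mul_nonsing_inv_cancel_right _ _ hdet]
  have hD : D = P⁻¹ * A * P := by rw [mul_assoc, h, nonsing_inv_mul_cancel_left _ _ hdet]
  constructor
  · intro h1
    rw [hD, exp_conj' _ _ hP, h1, Matrix.mul_one, nonsing_inv_mul _ hdet]
  · intro h1
    rw [hA, exp_conj _ _ hP, h1, Matrix.mul_one, mul_nonsing_inv _ hdet]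

end Matrix

theorem Complex.exp_ofReal_mul_I_eq_one_iff (θ : ℝ) :
    exp (θ * I) = 1 ↔ ∃ n : ℤ, θ = n * (2 * π) := by
  rw [Complex.exp_eq_one_iff]
  refine exists_congr fun n => ?_
  rw [← mul_assoc, mul_left_inj' I_ne_zero]
  exact_mod_cast Iff.rfl

theorem Oprime_zero : Oprime 0 = 0 := by
  ext i j
  fin_cases i <;> fin_cases j <;> simp [Oprime]

def Oprime.eigenbasis (a l : ℂ) : Matrix (Fin 3) (Fin 3) ℂ :=
  !![1, conj l, conj l; -1, conj l, conj l; 0, a, -a]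

theorem Oprime.det_eigenbasis (a l : ℂ) : (Oprime.eigenbasis a l).det = -4 * a * conj l := by
  rw [det_fin_three]
  simp only [eigenbasis, of_apply, cons_val', cons_val_zero, cons_val_one, cons_val,
    cons_val_fin_one]
  ring

theorem Oprime_mul_eigenbasis {a l : ℂ} (ha : a ^ 2 = 2 * l * conj l) :
    Oprime l * Oprime.eigenbasis a l = Oprime.eigenbasis a l * diagonal ![0, -a, a] := by
  rw [Oprime, Oprime.eigenbasis, diagonal_vec3, mul_fin_three, mul_fin_three]
  congr 1
  refine vec3_eq (vec3_eq ?_ ?_ ?_) (vec3_eq ?_ ?_ ?_) (vec3_eq ?_ ?_ ?_)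
  any_goals ring1
  all_goals linear_combination ha

/-- For every `λ ∈ ℂ`, the one-step interaction unitary `exp(−i·O′)` equals the identity
if and only if `√2·|λ|` is an integer multiple of `2π`. -/
theorem exp_interaction_eq_one_iff (l : ℂ) :
    NormedSpace.exp ((-Complex.I) • Oprime l) = 1 ↔
      ∃ n : ℤ, Real.sqrt 2 * ‖l‖ = n * (2 * Real.pi) := by
  rcases eq_or_ne l 0 with rfl | hl
  · simp [Oprime_zero]
  set θ := Real.sqrt 2 * ‖l‖
  have hθ : (θ : ℂ) ^ 2 = 2 * l * conj l := by
    have hθ_sq : θ ^ 2 = 2 * ‖l‖ ^ 2 := by rw [mul_pow, Real.sq_sqrt zero_le_two]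
    rw [mul_assoc, mul_conj, normSq_eq_norm_sq]
    exact_mod_cast hθ_sq
  have hP : IsUnit (Oprime.eigenbasis θ l) := by
    have hθ0 : θ ≠ 0 := by positivity
    rw [isUnit_iff_isUnit_det, Oprime.det_eigenbasis, isUnit_iff_ne_zero]
    simp [hl, hθ0]
  have hA : (-I) • Oprime l * Oprime.eigenbasis θ l =
      Oprime.eigenbasis θ l * diagonal ((-I) • ![0, -(θ : ℂ), θ]) := by
    rw [Matrix.smul_mul, Oprime_mul_eigenbasis hθ, diagonal_smul, Matrix.mul_smul]
  rw [Matrix.exp_eq_one_iff_of_mul_eq_mul hP hA, Matrix.exp_diagonal_eq_one_iff,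
    Fin.forall_fin_succ]
  simp [← Complex.exp_eq_exp_ℂ, Complex.exp_neg, mul_comm I, exp_ofReal_mul_I_eq_one_iff]
end
end

section
/- For every λ ∈ ℂ with λ ≠ 0, writing a := √2·|λ|, the matrix exponential of −i·O′ has the closed form exp(−i·O′) = I − i·(sin(a)/a)·O′ + ((cos(a) − 1)/(2|λ|²))·O′², where I is the 3×3 identity. -/
/-!
Since `O′³ = 2|λ|² O′`, the matrix `M = −i O′` satisfies `M³ = −a² M`, so its powers collapse to
`M^(2n+1) = (−a²)ⁿ M` and `M^(2n+2) = (−a²)ⁿ M²`. The odd part of the exponential series of `M` is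
then the sine series of `a` (divided by `a`) times `M`, and the even part beyond the constant term
is the cosine series minus `1` (divided by `−a²`) times `M²`.
-/

noncomputable section
open Matrix

open Nat NormedSpace

section PowThree

variable {R A : Type*} [CommSemiring R] [Semiring A] [Algebra R A] {x : A} {c : R}

theorem pow_two_mul_add_one_of_pow_three_eq_smul (h : x ^ 3 = c • x) (n : ℕ) :
    x ^ (2 * n + 1) = c ^ n • x := by
  induction n with
  | zero => simp
  | succ n ih =>
    rw [show 2 * (n + 1) + 1 = 2 * n + 1 + 2 by ring, pow_add, ih, smul_mul_assoc,
      ← pow_succ' x 2, h, smul_smul, pow_succ]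

theorem pow_two_mul_add_two_of_pow_three_eq_smul (h : x ^ 3 = c • x) (n : ℕ) :
    x ^ (2 * n + 2) = c ^ n • x ^ 2 := by
  rw [pow_succ, pow_two_mul_add_one_of_pow_three_eq_smul h, smul_mul_assoc, ← sq]

end PowThree

section ExpPowThree

variable {A : Type*} [NormedRing A] [NormedAlgebra ℂ A] {x : A} {z : ℂ}

theorem hasSum_exp_odd_of_pow_three_eq_neg_sq_smul (hz : z ≠ 0) (h : x ^ 3 = (-z ^ 2) • x) :
    HasSum (fun n ↦ ((2 * n + 1)! : ℂ)⁻¹ • x ^ (2 * n + 1)) ((Complex.sin z / z) • x) := by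
  convert ((Complex.hasSum_sin z).div_const z).smul_const x using 2 with n
  rw [pow_two_mul_add_one_of_pow_three_eq_smul h, smul_smul, neg_pow, ← pow_mul, pow_succ]
  congr 1
  field_simp

theorem hasSum_exp_even_of_pow_three_eq_neg_sq_smul (hz : z ≠ 0) (h : x ^ 3 = (-z ^ 2) • x) :
    HasSum (fun n ↦ ((2 * n)! : ℂ)⁻¹ • x ^ (2 * n))
      (1 + ((1 - Complex.cos z) / z ^ 2) • x ^ 2) := by
  have hcos : HasSum (fun n ↦ (-1) ^ (n + 1) * z ^ (2 * (n + 1)) / (2 * (n + 1))!)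
      (Complex.cos z - 1) := by
    simpa using (hasSum_nat_add_iff' 1).mpr (Complex.hasSum_cos z)
  have htail : HasSum (fun n ↦ ((2 * (n + 1))! : ℂ)⁻¹ • x ^ (2 * (n + 1)))
      (((1 - Complex.cos z) / z ^ 2) • x ^ 2) := by
    convert (hcos.div_const (-z ^ 2)).smul_const (x ^ 2) using 2 with n
    · rw [mul_add, mul_one, pow_two_mul_add_two_of_pow_three_eq_smul h, smul_smul, neg_pow,
        ← pow_mul]
      congr 1
      field_simp
      ring
    · field_simp
      ring
  simpa using HasSum.zero_add (f := fun n ↦ ((2 * n)! : ℂ)⁻¹ • x ^ (2 * n)) htail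

theorem exp_eq_of_pow_three_eq_neg_sq_smul [CompleteSpace A] (hz : z ≠ 0)
    (h : x ^ 3 = (-z ^ 2) • x) :
    exp x = 1 + (Complex.sin z / z) • x + ((1 - Complex.cos z) / z ^ 2) • x ^ 2 := by
  refine (exp_series_hasSum_exp' (𝕂 := ℂ) x).unique ?_
  convert HasSum.even_add_odd (f := fun n ↦ (n ! : ℂ)⁻¹ • x ^ n)
    (hasSum_exp_even_of_pow_three_eq_neg_sq_smul hz h)
    (hasSum_exp_odd_of_pow_three_eq_neg_sq_smul hz h) using 1
  abel

end ExpPowThree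

-- Matrices carry no canonical norm; `exp` does not depend on one, so any algebra norm will do.
theorem Matrix.exp_eq_of_pow_three_eq_neg_sq_smul {m : Type*} [Fintype m] [DecidableEq m]
    {M : Matrix m m ℂ} {z : ℂ} (hz : z ≠ 0) (h : M ^ 3 = (-z ^ 2) • M) :
    exp M = 1 + (Complex.sin z / z) • M + ((1 - Complex.cos z) / z ^ 2) • M ^ 2 := by
  let _ : NormedRing (Matrix m m ℂ) := Matrix.linftyOpNormedRing
  let _ : NormedAlgebra ℂ (Matrix m m ℂ) := Matrix.linftyOpNormedAlgebra
  exact _root_.exp_eq_of_pow_three_eq_neg_sq_smul hz h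

theorem Oprime_pow_three (l : ℂ) : Oprime l ^ 3 = (2 * ‖l‖ ^ 2 : ℂ) • Oprime l := by
  rw [← Complex.mul_conj']
  ext i j
  fin_cases i <;> fin_cases j <;>
    simp [Oprime, pow_succ, Matrix.mul_apply, Fin.sum_univ_three, -mul_eq_mul_right_iff] <;> ring

/-- For `λ ≠ 0` and `a := √2·|λ|`, the one-step interaction unitary has the closed form
`exp(−i·O′) = I − i·(sin a / a)·O′ + ((cos a − 1)/(2|λ|²))·O′²`. -/
theorem exp_interaction_closed_form (l : ℂ) (hl : l ≠ 0) :
    let a : ℝ := Real.sqrt 2 * ‖l‖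
    NormedSpace.exp ((-Complex.I) • Oprime l) =
      1 - (Complex.I * ((Real.sin a / a : ℝ) : ℂ)) • Oprime l
        + (((Real.cos a - 1) / (2 * ‖l‖ ^ 2) : ℝ) : ℂ) • (Oprime l ^ 2) := by
  intro a
  have ha : (a : ℂ) ≠ 0 := by simp [a, hl]
  have ha_sq : (a : ℂ) ^ 2 = 2 * ‖l‖ ^ 2 := by
    norm_cast
    rw [mul_pow, Real.sq_sqrt zero_le_two]
  have hcube : ((-Complex.I) • Oprime l) ^ 3 = (-(a : ℂ) ^ 2) • ((-Complex.I) • Oprime l) := by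
    rw [smul_pow, Oprime_pow_three, ha_sq, smul_smul, smul_smul]
    congr 1
    linear_combination (-2 * (‖l‖ : ℂ) ^ 2) * Complex.I_pow_three
  rw [Matrix.exp_eq_of_pow_three_eq_neg_sq_smul ha hcube, smul_pow, smul_smul, smul_smul, ha_sq]
  push_cast
  rw [neg_sq, Complex.I_sq]
  module
end
end

section
/- Let O, Q′ and S be the operators on ℂ⁴ ⊗ ℂ⁴ defined in the context. Then Q′·O = O·Q′ = O, and S·O·S = O. Consequently, for every λ ∈ ℂ the interaction generator λ·O + conj(λ)·O† commutes both with the projector Q′ and with the swap S. -/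
noncomputable section
open Matrix Kronecker

/-- The matrix unit `|a⟩⟨b|` on `ℂ⁴` (with basis `|1⟩,…,|4⟩` indexed by `0,…,3`). -/
def E4 (a b : Fin 4) : Matrix (Fin 4) (Fin 4) ℂ := Matrix.single a b 1

/-- The interaction operator
`O = |3⟩⟨1|⊗|4⟩⟨4| + |3⟩⟨3|⊗|4⟩⟨2| + |4⟩⟨2|⊗|3⟩⟨3| + |4⟩⟨4|⊗|3⟩⟨1|` on `ℂ⁴ ⊗ ℂ⁴`
(basis labels `1,2,3,4` encoded as `0,1,2,3`). -/
def Oint : Matrix (Fin 4 × Fin 4) (Fin 4 × Fin 4) ℂ :=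
  E4 2 0 ⊗ₖ E4 3 3 + E4 2 2 ⊗ₖ E4 3 1 + E4 3 1 ⊗ₖ E4 2 2 + E4 3 3 ⊗ₖ E4 2 0

/-- The orthogonal projection `Q′` onto the span of
`{|2⟩|3⟩, |3⟩|2⟩, |3⟩|4⟩, |4⟩|3⟩, |1⟩|4⟩, |4⟩|1⟩}`
(basis labels `1,2,3,4` encoded as `0,1,2,3`). -/
def Qproj : Matrix (Fin 4 × Fin 4) (Fin 4 × Fin 4) ℂ :=
  Matrix.diagonal fun ab =>
    if ab ∈ ({(1, 2), (2, 1), (2, 3), (3, 2), (0, 3), (3, 0)} : Finset (Fin 4 × Fin 4))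
    then 1 else 0

/-- The swap operator `S|a⟩|b⟩ = |b⟩|a⟩` on `ℂ⁴ ⊗ ℂ⁴`. -/
def Swap : Matrix (Fin 4 × Fin 4) (Fin 4 × Fin 4) ℂ :=
  Matrix.of fun ab cd => if cd = (ab.2, ab.1) then 1 else 0

/-!
Each of the four Kronecker terms of `O` is a single matrix unit whose row and column indices lie
in the support of `Q′`, which gives `Q′O = OQ′ = O`; conjugating by `S` exchanges the tensor factors
and so permutes the four terms among themselves. The commutation relations for `λO + conj(λ)O†` then
hold because both `Q′` and `S` are self-adjoint and commute with `O`.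
-/

section StarAlgebra

variable {R A : Type*} [CommSemiring R] [StarRing R] [Semiring A] [StarRing A]
  [Algebra R A]

theorem Commute.smul_add_star_smul_star {O P : A} (h : Commute O P) (hP : IsSelfAdjoint P)
    (l : R) : Commute (l • O + star l • star O) P :=
  (h.smul_left l).add_left ((hP.star_eq ▸ h.star_star : Commute (star O) P).smul_left (star l))

end StarAlgebra

theorem commute_of_mul_mul_eq_of_mul_self_eq_one {M : Type*} [Monoid M] {O S : M}
    (hS : S * S = 1) (h : S * O * S = O) : Commute O S :=
  calc O * S = S * O * S * S := by rw [h]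
    _ = S * O := by rw [mul_assoc, hS, mul_one]

namespace Matrix

variable {m n α : Type*} [Fintype n] [DecidableEq n] [DecidableEq m] [NonUnitalNonAssocSemiring α]

theorem diagonal_mul_single (d : n → α) (i : n) (j : m) (c : α) :
    diagonal d * single i j c = single i j (d i * c) := by
  ext a b
  by_cases ha : i = a <;> simp [single, diagonal_mul, ha]

theorem single_mul_diagonal (d : n → α) (i : m) (j : n) (c : α) :
    single i j c * diagonal d = single i j (c * d j) := by
  ext a b
  by_cases hb : j = b <;> simp [single, mul_diagonal, hb]

end Matrix

theorem oint_eq_sum_single : Oint =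
    single (2, 3) (0, 3) 1 + single (2, 3) (2, 1) 1 + single (3, 2) (1, 2) 1 +
      single (3, 2) (3, 0) 1 := by
  simp only [Oint, E4, single_kronecker_single, mul_one]

theorem qproj_mul_oint : Qproj * Oint = Oint := by
  simp [oint_eq_sum_single, Qproj, mul_add, diagonal_mul_single]

theorem oint_mul_qproj : Oint * Qproj = Oint := by
  simp [oint_eq_sum_single, Qproj, add_mul, single_mul_diagonal]

theorem isSelfAdjoint_qproj : IsSelfAdjoint Qproj :=
  isHermitian_diagonal_iff.mpr fun _ => by split_ifs <;> simp

theorem swap_eq_toMatrix_prodComm :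
    Swap = (Equiv.prodComm (Fin 4) (Fin 4)).toPEquiv.toMatrix := by
  ext x y
  simp [Swap, Prod.ext_iff, eq_comm]

theorem swap_mul_swap : Swap * Swap = 1 := by
  ext x y
  simp [swap_eq_toMatrix_prodComm, PEquiv.toMatrix_toPEquiv_mul, one_apply]

theorem isSelfAdjoint_swap : IsSelfAdjoint Swap := by
  ext x y
  simp only [star_apply, Swap, of_apply, Prod.ext_iff, apply_ite star, star_one, star_zero]
  exact if_congr (by tauto) rfl rfl

theorem swap_mul_kronecker_mul_swap (A B : Matrix (Fin 4) (Fin 4) ℂ) :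
    Swap * (A ⊗ₖ B) * Swap = B ⊗ₖ A := by
  rw [swap_eq_toMatrix_prodComm, PEquiv.toMatrix_toPEquiv_mul, PEquiv.mul_toMatrix_toPEquiv]
  ext x y
  simp [mul_comm]

theorem swap_mul_oint_mul_swap : Swap * Oint * Swap = Oint := by
  simp only [Oint, mul_add, add_mul, swap_mul_kronecker_mul_swap]
  abel

/-- `Q′·O = O·Q′ = O` and `S·O·S = O`; consequently, for every `λ ∈ ℂ` the interaction
generator `λ·O + conj(λ)·O†` commutes both with the projector `Q′` and with the swap `S`. -/
theorem interaction_block_swap_invariance :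
    Qproj * Oint = Oint ∧ Oint * Qproj = Oint ∧ Swap * Oint * Swap = Oint ∧
    ∀ l : ℂ, Commute (l • Oint + (starRingEnd ℂ) l • Ointᴴ) Qproj ∧
      Commute (l • Oint + (starRingEnd ℂ) l • Ointᴴ) Swap := by
  refine ⟨qproj_mul_oint, oint_mul_qproj, swap_mul_oint_mul_swap, fun l => ?_⟩
  have hQ : Commute Oint Qproj := oint_mul_qproj.trans qproj_mul_oint.symm
  have hS : Commute Oint Swap :=
    commute_of_mul_mul_eq_of_mul_self_eq_one swap_mul_swap swap_mul_oint_mul_swap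
  simpa only [starRingEnd_apply, star_eq_conjTranspose] using
    ⟨hQ.smul_add_star_smul_star isSelfAdjoint_qproj l,
      hS.smul_add_star_smul_star isSelfAdjoint_swap l⟩
end
end

section
/- With the maps of the context, for every p ∈ ℝ, every λ ∈ ℂ and every integer y₀ ≠ 0: A_p(e₁δ_{y₀} − e₄δ_{−y₀}) = e^{2ip}·(e₁δ_{y₀} − e₄δ_{−y₀}) and A_p(e₂δ_{y₀} − e₅δ_{−y₀}) = e^{−2ip}·(e₂δ_{y₀} − e₅δ_{−y₀}). (These are the eigenvectors spanning the subspaces H_a and H_b on which the interacting two-particle evolution acts as the pure phases e^{±2ip}.) -/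
noncomputable section
open Matrix
open scoped Classical

/-- The 6×6 block-diagonal matrix `M = diag(O′, O′)`, where `O′` is the 3×3 matrix with rows
`(0, 0, −conj λ)`, `(0, 0, −conj λ)`, `(−λ, −λ, 0)`. -/
def Mblk (l : ℂ) : Matrix (Fin 6) (Fin 6) ℂ :=
  !![0, 0, -(starRingEnd ℂ) l, 0, 0, 0;
     0, 0, -(starRingEnd ℂ) l, 0, 0, 0;
     -l, -l, 0, 0, 0, 0;
     0, 0, 0, 0, 0, -(starRingEnd ℂ) l;
     0, 0, 0, 0, 0, -(starRingEnd ℂ) l;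
     0, 0, 0, -l, -l, 0]

/-- The one-step interaction unitary `E = exp(−i·M)`. -/
def Emat (l : ℂ) : Matrix (Fin 6) (Fin 6) ℂ := NormedSpace.exp ((-Complex.I) • Mblk l)

/-- The swap `S`: `(S x)(y) = (x(−y)₄, x(−y)₅, x(−y)₆, x(−y)₁, x(−y)₂, x(−y)₃)`. -/
def Sop (x : ℤ → Fin 6 → ℂ) : ℤ → Fin 6 → ℂ := fun y i => x (-y) (![3, 4, 5, 0, 1, 2] i)

/-- The antisymmetrizer `P₋ = (1/2)(id − S)`. -/
def Pneg (x : ℤ → Fin 6 → ℂ) : ℤ → Fin 6 → ℂ := fun y i => (1 / 2) * (x y i - Sop x y i)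

/-- The free evolution `D_p` at total momentum `p`:
`(D_p x)(y) = (e^{2ip} x(y)₁, e^{−2ip} x(y)₂, x(y+2)₃, e^{2ip} x(y)₄, e^{−2ip} x(y)₅, x(y−2)₆)`. -/
def Dop (p : ℝ) (x : ℤ → Fin 6 → ℂ) : ℤ → Fin 6 → ℂ := fun y =>
  ![Complex.exp (2 * p * Complex.I) * x y 0,
    Complex.exp (-(2 * p) * Complex.I) * x y 1,
    x (y + 2) 2,
    Complex.exp (2 * p * Complex.I) * x y 3,
    Complex.exp (-(2 * p) * Complex.I) * x y 4,
    x (y - 2) 5]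

/-- The interaction `J`: `(J x)(0) = E · x(0)` and `(J x)(y) = x(y)` for `y ≠ 0`. -/
def Jop (l : ℂ) (x : ℤ → Fin 6 → ℂ) : ℤ → Fin 6 → ℂ := fun y =>
  if y = 0 then (Emat l).mulVec (x 0) else x y

/-- The one-step two-particle evolution `A_p = P₋ ∘ J ∘ D_p ∘ P₋`. -/
def Aop (l : ℂ) (p : ℝ) : (ℤ → Fin 6 → ℂ) → (ℤ → Fin 6 → ℂ) :=
  Pneg ∘ Jop l ∘ Dop p ∘ Pneg

/-! The vectors are antisymmetric under the swap `S`, so `P₋` fixes them; since `y₀ ≠ 0` they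
vanish at the interaction site `0`, so `J` fixes them; and they live in the components on which
the free evolution `D_p` is the pure phase `e^{±2ip}`. -/

/-- The vector `e_i δ_{y₀} − e_j δ_{−y₀}`. -/
def dipole (y₀ : ℤ) (i j : Fin 6) : ℤ → Fin 6 → ℂ := fun y k =>
  (if y = y₀ ∧ k = i then 1 else 0) - (if y = -y₀ ∧ k = j then 1 else 0)

lemma swapIndex_involutive : Function.Involutive (![3, 4, 5, 0, 1, 2] : Fin 6 → Fin 6) := by
  intro k
  fin_cases k <;> rfl

lemma Pneg_smul (c : ℂ) (x : ℤ → Fin 6 → ℂ) : Pneg (c • x) = c • Pneg x := by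
  funext y i
  simp only [Pneg, Sop, Pi.smul_apply, smul_eq_mul]
  ring

lemma Pneg_eq_self_of_Sop_eq_neg {x : ℤ → Fin 6 → ℂ} (hx : Sop x = -x) : Pneg x = x := by
  funext y i
  simp only [Pneg, hx, Pi.neg_apply]
  ring

lemma Jop_eq_self_of_apply_zero (l : ℂ) {x : ℤ → Fin 6 → ℂ} (hx : x 0 = 0) : Jop l x = x := by
  funext y
  by_cases hy : y = 0
  · simp [Jop, hy, hx]
  · simp [Jop, hy]

lemma Dop_eq_smul_of_support_first (p : ℝ) {x : ℤ → Fin 6 → ℂ}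
    (hx : ∀ y k, k ≠ 0 → k ≠ 3 → x y k = 0) :
    Dop p x = Complex.exp (2 * p * Complex.I) • x := by
  funext y k
  fin_cases k <;> simp [Dop, hx]

lemma Dop_eq_smul_of_support_second (p : ℝ) {x : ℤ → Fin 6 → ℂ}
    (hx : ∀ y k, k ≠ 1 → k ≠ 4 → x y k = 0) :
    Dop p x = Complex.exp (-(2 * p) * Complex.I) • x := by
  funext y k
  fin_cases k <;> simp [Dop, hx]

theorem Aop_eq_smul_of_Dop_eq_smul (l : ℂ) (p : ℝ) (c : ℂ) {x : ℤ → Fin 6 → ℂ}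
    (hS : Sop x = -x) (h0 : x 0 = 0) (hD : Dop p x = c • x) : Aop l p x = c • x := by
  have hP : Pneg x = x := Pneg_eq_self_of_Sop_eq_neg hS
  have hJ : Jop l (c • x) = c • x := Jop_eq_self_of_apply_zero l (by simp [h0])
  simp only [Aop, Function.comp_apply, hP, hD, hJ, Pneg_smul]

lemma Sop_dipole (y₀ : ℤ) {i j : Fin 6} (hij : ![3, 4, 5, 0, 1, 2] i = j) :
    Sop (dipole y₀ i j) = -dipole y₀ i j := by
  have hji : ![3, 4, 5, 0, 1, 2] j = i := hij ▸ swapIndex_involutive i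
  funext y k
  simp only [Sop, dipole, swapIndex_involutive.eq_iff, hij, hji, neg_eq_iff_eq_neg, neg_neg,
    Pi.neg_apply, neg_sub]

lemma dipole_apply_zero {y₀ : ℤ} (hy : y₀ ≠ 0) (i j : Fin 6) : dipole y₀ i j 0 = 0 := by
  funext k
  simp [dipole, hy.symm, eq_comm (a := (0 : ℤ)), hy]

lemma dipole_apply_of_ne {y₀ : ℤ} {i j k : Fin 6} (y : ℤ) (hi : k ≠ i) (hj : k ≠ j) :
    dipole y₀ i j y k = 0 := by
  simp [dipole, hi, hj]

/-- The vectors `e₁δ_{y₀} − e₄δ_{−y₀}` and `e₂δ_{y₀} − e₅δ_{−y₀}` (for `y₀ ≠ 0`) are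
eigenvectors of the interacting two-particle evolution `A_p` with eigenvalues `e^{2ip}` and
`e^{−2ip}` respectively; they span the subspaces `H_a` and `H_b` on which `A_p` acts as a
pure phase. -/
theorem Aop_phase_eigenvectors (l : ℂ) (p : ℝ) (y₀ : ℤ) (hy : y₀ ≠ 0) :
    let v₁ : ℤ → Fin 6 → ℂ := fun y i =>
      (if y = y₀ ∧ i = 0 then 1 else 0) - (if y = -y₀ ∧ i = 3 then 1 else 0)
    let v₂ : ℤ → Fin 6 → ℂ := fun y i =>
      (if y = y₀ ∧ i = 1 then 1 else 0) - (if y = -y₀ ∧ i = 4 then 1 else 0)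
    Aop l p v₁ = (fun y i => Complex.exp (2 * p * Complex.I) * v₁ y i) ∧
    Aop l p v₂ = (fun y i => Complex.exp (-(2 * p) * Complex.I) * v₂ y i) := by
  intro v₁ v₂
  exact
    ⟨Aop_eq_smul_of_Dop_eq_smul l p _ (Sop_dipole y₀ rfl) (dipole_apply_zero hy 0 3)
      (Dop_eq_smul_of_support_first p fun y _ => dipole_apply_of_ne y),
    Aop_eq_smul_of_Dop_eq_smul l p _ (Sop_dipole y₀ rfl) (dipole_apply_zero hy 1 4)
      (Dop_eq_smul_of_support_second p fun y _ => dipole_apply_of_ne y)⟩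
end
end

section
/- With the maps of the context, let p ∈ ℝ be arbitrary and suppose λ ∈ ℂ satisfies √2·|λ| = (2n+1)π for some nonnegative integer n. Then the finitely supported vectors φ_{b−} := (e^{−ip}(e₁ − e₄) − e^{ip}(e₂ − e₅))·δ₀ and φ_{b+} := (e^{−ip}(e₁ − e₄) + e^{ip}(e₂ − e₅))·δ₀ satisfy A_p φ_{b−} = φ_{b−} and A_p φ_{b+} = −φ_{b+}; i.e. at the critical coupling strengths √2|λ| ∈ (2ℤ+1)π the interacting two-particle evolution has two perfectly localized bound states with eigenvalues +1 and −1, for every value of the total momentum. -/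
/-!
With `s = √2‖λ‖`, in each block the matrix `M` kills `(1, −1, 0)` and `M²` acts as `s²` on
`(1, 1, 0)`. Hence, on vectors with vanishing third and sixth entries, `E = exp(−iM)`
is the identity on the first kind and acts on the second as `cosh(is) = cos s`, the remaining
term carrying a factor `sin s`. For `s ∈ (2ℤ+1)π` this gives
`E (x₁, x₂, 0, x₄, x₅, 0) = −(x₂, x₁, 0, x₅, x₄, 0)`. The vectors `(a(e₁ − e₄) + b(e₂ − e₅))δ₀`
are antisymmetric, hence fixed by `P₋`, and `D_p` only multiplies their entries by `e^{±2ip}`, so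
`A_p` sends `(a, b)` to `(−e^{−2ip} b, −e^{2ip} a)`; `a = e^{−ip}`, `b = ∓e^{ip}` are eigenvectors
with eigenvalue `±1`.
-/

noncomputable section
open Matrix
open scoped Classical

open NormedSpace

section MatrixExp

variable {m : Type*} [Fintype m] [DecidableEq m]

theorem Matrix.pow_mulVec_of_mulVec_eq_smul {𝕂 : Type*} [CommSemiring 𝕂] {A : Matrix m m 𝕂}
    {v : m → 𝕂} {μ : 𝕂} (h : A *ᵥ v = μ • v) (k : ℕ) : A ^ k *ᵥ v = μ ^ k • v := by
  induction k with
  | zero => simp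
  | succ k ih => rw [pow_succ', ← mulVec_mulVec, ih, mulVec_smul, h, smul_smul, ← pow_succ]

open scoped Norms.Operator in
theorem Matrix.exp_mulVec_of_mulVec_eq_smul {𝕂 : Type*} [RCLike 𝕂] {A : Matrix m m 𝕂}
    {v : m → 𝕂} {μ : 𝕂} (h : A *ᵥ v = μ • v) : exp A *ᵥ v = exp μ • v := by
  have hA := (exp_series_hasSum_exp' (𝕂 := 𝕂) A).map (mulVec.addMonoidHomLeft v)
    (continuous_id.matrix_mulVec continuous_const)
  have hμ := (exp_series_hasSum_exp' (𝕂 := 𝕂) μ).smul_const v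
  simp only [Function.comp_def, mulVec.addMonoidHomLeft, AddMonoidHom.coe_mk, ZeroHom.coe_mk,
    smul_mulVec, pow_mulVec_of_mulVec_eq_smul h, smul_smul, smul_eq_mul] at hA hμ
  exact hA.unique hμ

theorem Matrix.exp_mulVec_of_mulVec_mulVec_eq_sq_smul {A : Matrix m m ℂ} {v : m → ℂ} {μ : ℂ}
    (hμ : μ ≠ 0) (h : A *ᵥ A *ᵥ v = μ ^ 2 • v) :
    exp A *ᵥ v = Complex.cosh μ • v + (Complex.sinh μ / μ) • A *ᵥ v := by
  have eigen : ∀ ε : ℂ, ε ^ 2 = 1 →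
      exp A *ᵥ (v + (ε / μ) • A *ᵥ v) = Complex.exp (ε * μ) • (v + (ε / μ) • A *ᵥ v) := by
    intro ε hε
    rw [Complex.exp_eq_exp_ℂ]
    refine exp_mulVec_of_mulVec_eq_smul ?_
    rw [mulVec_add, mulVec_smul, h, smul_add, smul_smul, smul_smul, add_comm]
    have h₁ : ε / μ * μ ^ 2 = ε * μ := by field_simp
    have h₂ : ε * μ * (ε / μ) = 1 := by field_simp; linear_combination hε
    rw [h₁, h₂, one_smul]
  have hv : v = (1 / 2 : ℂ) • (v + (1 / μ) • A *ᵥ v) + (1 / 2 : ℂ) • (v + (-1 / μ) • A *ᵥ v) := by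
    ext i; simp only [Pi.add_apply, Pi.smul_apply, smul_eq_mul]; ring
  conv_lhs => rw [hv, mulVec_add, mulVec_smul, mulVec_smul, eigen 1 (by norm_num),
    eigen (-1) (by norm_num)]
  ext i
  simp only [Pi.add_apply, Pi.smul_apply, smul_eq_mul, Complex.cosh, Complex.sinh, one_mul,
    neg_one_mul]
  ring

end MatrixExp

theorem Mblk_mulVec_antisymm (l a b : ℂ) : Mblk l *ᵥ ![a, -a, 0, b, -b, 0] = 0 := by
  ext i; fin_cases i <;> simp [Mblk, mulVec, dotProduct, Fin.sum_univ_six]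

theorem Mblk_mulVec_mulVec_symm (l c d : ℂ) :
    Mblk l *ᵥ Mblk l *ᵥ ![c, c, 0, d, d, 0] = (2 * Complex.normSq l : ℂ) • ![c, c, 0, d, d, 0] := by
  ext i
  fin_cases i <;> simp [Mblk, mulVec, dotProduct, Fin.sum_univ_six, ← Complex.mul_conj] <;> ring

theorem Emat_mulVec_of_cos_eq_neg_one {l : ℂ} (h : Real.cos (√2 * ‖l‖) = -1) (x₁ x₂ x₄ x₅ : ℂ) :
    Emat l *ᵥ ![x₁, x₂, 0, x₄, x₅, 0] = ![-x₂, -x₁, 0, -x₅, -x₄, 0] := by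
  set s := √2 * ‖l‖ with hs_def
  have hs : (s : ℂ) ≠ 0 := by
    rintro hs0
    rw [Complex.ofReal_eq_zero.mp hs0, Real.cos_zero] at h
    norm_num at h
  have hsin : Real.sin s = 0 := by nlinarith [Real.sin_sq_add_cos_sq s]
  have hs_sq : ((s : ℂ) * Complex.I) ^ 2 = -(2 * Complex.normSq l) := by
    have : s ^ 2 = 2 * ‖l‖ ^ 2 := by rw [hs_def, mul_pow, Real.sq_sqrt zero_le_two]
    rw [mul_pow, Complex.I_sq, Complex.normSq_eq_norm_sq, ← Complex.ofReal_pow, this]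
    push_cast; ring
  set a := (x₁ - x₂) / 2
  set b := (x₄ - x₅) / 2
  set c := (x₁ + x₂) / 2
  set d := (x₄ + x₅) / 2
  have hsplit : ![x₁, x₂, 0, x₄, x₅, 0] = ![a, -a, 0, b, -b, 0] + ![c, c, 0, d, d, 0] := by
    ext i; fin_cases i <;> simp [a, b, c, d] <;> ring
  have hker : (-Complex.I • Mblk l) *ᵥ ![a, -a, 0, b, -b, 0] = (0 : ℂ) • ![a, -a, 0, b, -b, 0] := by
    rw [smul_mulVec, Mblk_mulVec_antisymm, smul_zero, zero_smul]
  have hsq : (-Complex.I • Mblk l) *ᵥ (-Complex.I • Mblk l) *ᵥ ![c, c, 0, d, d, 0] =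
      ((s : ℂ) * Complex.I) ^ 2 • ![c, c, 0, d, d, 0] := by
    simp only [smul_mulVec, mulVec_smul, Mblk_mulVec_mulVec_symm, smul_smul, hs_sq]
    congr 1
    linear_combination (2 * (Complex.normSq l : ℂ)) * Complex.I_sq
  rw [hsplit, mulVec_add, Emat, exp_mulVec_of_mulVec_eq_smul hker,
    exp_mulVec_of_mulVec_mulVec_eq_sq_smul (mul_ne_zero hs Complex.I_ne_zero) hsq,
    Complex.cosh_mul_I, Complex.sinh_mul_I, ← Complex.ofReal_cos, ← Complex.ofReal_sin, h, hsin]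
  ext i; fin_cases i <;> simp [a, b, c, d] <;> ring

theorem Pneg_single_antisymm (a b : ℂ) :
    Pneg (Pi.single 0 ![a, b, 0, -a, -b, 0]) = Pi.single 0 ![a, b, 0, -a, -b, 0] := by
  funext y i
  by_cases hy : y = 0
  · subst hy; fin_cases i <;> simp [Pneg, Sop] <;> ring
  · simp [Pneg, Sop, hy]

theorem Dop_single (p : ℝ) (a b c d : ℂ) :
    Dop p (Pi.single 0 ![a, b, 0, c, d, 0]) =
      Pi.single 0 ![Complex.exp (2 * p * Complex.I) * a, Complex.exp (-(2 * p) * Complex.I) * b, 0,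
        Complex.exp (2 * p * Complex.I) * c, Complex.exp (-(2 * p) * Complex.I) * d, 0] := by
  funext y i
  by_cases hy : y = 0
  · subst hy; fin_cases i <;> simp [Dop]
  · fin_cases i <;> simp [Dop, Pi.single_apply, hy, ite_apply]

theorem Jop_single (l : ℂ) (v : Fin 6 → ℂ) : Jop l (Pi.single 0 v) = Pi.single 0 (Emat l *ᵥ v) := by
  funext y
  by_cases hy : y = 0 <;> simp [Jop, hy]

theorem Aop_single_antisymm_of_cos_eq_neg_one {l : ℂ} (h : Real.cos (√2 * ‖l‖) = -1) (p : ℝ)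
    (a b : ℂ) :
    Aop l p (Pi.single 0 ![a, b, 0, -a, -b, 0]) =
      Pi.single 0 ![-(Complex.exp (-(2 * p) * Complex.I) * b),
        -(Complex.exp (2 * p * Complex.I) * a), 0,
        Complex.exp (-(2 * p) * Complex.I) * b, Complex.exp (2 * p * Complex.I) * a, 0] := by
  simp only [Aop, Function.comp_apply, Pneg_single_antisymm, Dop_single, mul_neg, Jop_single,
    Emat_mulVec_of_cos_eq_neg_one h]
  rw [neg_neg, neg_neg]

/-- At the critical coupling strengths `√2|λ| = (2n+1)π`, for every total momentum `p`, the
perfectly localized vectors `φ_{b−} = (e^{−ip}(e₁−e₄) − e^{ip}(e₂−e₅))·δ₀` and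
`φ_{b+} = (e^{−ip}(e₁−e₄) + e^{ip}(e₂−e₅))·δ₀` are bound states of the interacting
two-particle evolution with eigenvalues `+1` and `−1`. -/
theorem Aop_bound_states_critical_coupling (l : ℂ) (p : ℝ) (n : ℕ)
    (hl : Real.sqrt 2 * ‖l‖ = (2 * n + 1) * Real.pi) :
    let φbm : ℤ → Fin 6 → ℂ := fun y =>
      if y = 0 then
        ![Complex.exp (-p * Complex.I), -Complex.exp (p * Complex.I), 0,
          -Complex.exp (-p * Complex.I), Complex.exp (p * Complex.I), 0]
      else 0
    let φbp : ℤ → Fin 6 → ℂ := fun y =>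
      if y = 0 then
        ![Complex.exp (-p * Complex.I), Complex.exp (p * Complex.I), 0,
          -Complex.exp (-p * Complex.I), -Complex.exp (p * Complex.I), 0]
      else 0
    Aop l p φbm = φbm ∧ Aop l p φbp = -φbp := by
  intro φbm φbp
  have hcos : Real.cos (√2 * ‖l‖) = -1 := by
    rw [hl, show (2 * n + 1) * Real.pi = n * (2 * Real.pi) + Real.pi by ring,
      Real.cos_nat_mul_two_pi_add_pi]
  have hm : Complex.exp (-(2 * p) * Complex.I) * Complex.exp (p * Complex.I) =
      Complex.exp (-p * Complex.I) := by rw [← Complex.exp_add]; congr 1; ring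
  have hp : Complex.exp (2 * p * Complex.I) * Complex.exp (-p * Complex.I) =
      Complex.exp (p * Complex.I) := by rw [← Complex.exp_add]; congr 1; ring
  have hφbm : φbm = Pi.single 0 ![Complex.exp (-p * Complex.I), -Complex.exp (p * Complex.I), 0,
      -Complex.exp (-p * Complex.I), -(-Complex.exp (p * Complex.I)), 0] := by
    funext y; simp [φbm, Pi.single_apply]
  have hφbp : φbp = Pi.single 0 ![Complex.exp (-p * Complex.I), Complex.exp (p * Complex.I), 0,
      -Complex.exp (-p * Complex.I), -Complex.exp (p * Complex.I), 0] := by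
    funext y; simp [φbp, Pi.single_apply]
  constructor
  · rw [hφbm, Aop_single_antisymm_of_cos_eq_neg_one hcos]
    simp only [mul_neg, hm, hp, neg_neg]
  · rw [hφbp, Aop_single_antisymm_of_cos_eq_neg_one hcos, hm, hp, ← Pi.single_neg]
    congr 1; ext i; fin_cases i <;> simp
end
end

section
/- Let γ, c ∈ ℝ with 0 < γ ≤ 1 and |c| ≤ 1, set ε := c·(1 + γ), and assume ε² − 4γ > 0. Then both real roots r_± := (ε ± √(ε² − 4γ))/(2γ) of the characteristic equation γ·t² − ε·t + 1 = 0 satisfy |r_±| ≥ 1. -/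
/-- For `0 < γ ≤ 1`, `|c| ≤ 1`, `ε = c(1+γ)` and `ε² − 4γ > 0`, both real roots
`r_± = (ε ± √(ε²−4γ))/(2γ)` of the characteristic equation `γt² − εt + 1 = 0`
satisfy `|r_±| ≥ 1`. -/
theorem roots_modulus_ge_one_pos_gamma (γ c : ℝ) (h0 : 0 < γ) (h1 : γ ≤ 1)
    (hc : |c| ≤ 1) :
    let ε := c * (1 + γ)
    ε ^ 2 - 4 * γ > 0 →
    let rp := (ε + Real.sqrt (ε ^ 2 - 4 * γ)) / (2 * γ)
    let rm := (ε - Real.sqrt (ε ^ 2 - 4 * γ)) / (2 * γ)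
    (γ * rp ^ 2 - ε * rp + 1 = 0) ∧ (γ * rm ^ 2 - ε * rm + 1 = 0) ∧
    1 ≤ |rp| ∧ 1 ≤ |rm| := by
  intro ε hd rp rm
  have hγ : (0 : ℝ) < 2 * γ := by linarith
  have hd0 : (0:ℝ) ≤ ε ^ 2 - 4 * γ := le_of_lt hd
  set D := Real.sqrt (ε ^ 2 - 4 * γ) with hD
  have hD2 : D ^ 2 = ε ^ 2 - 4 * γ := Real.sq_sqrt hd0
  have hDnn : 0 ≤ D := Real.sqrt_nonneg _
  have habsε : |ε| ≤ 1 + γ := by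
    have h := abs_mul c (1 + γ)
    rw [abs_of_pos (by linarith : (0:ℝ) < 1 + γ)] at h
    show |c * (1 + γ)| ≤ 1 + γ
    rw [h]; nlinarith [abs_nonneg c]
  obtain ⟨hεl, hεr⟩ := abs_le.mp habsε
  have heq1 : γ * rp ^ 2 - ε * rp + 1 = 0 := by
    show γ * ((ε + D) / (2 * γ)) ^ 2 - ε * ((ε + D) / (2 * γ)) + 1 = 0
    field_simp
    nlinarith [hD2]
  have heq2 : γ * rm ^ 2 - ε * rm + 1 = 0 := by
    show γ * ((ε - D) / (2 * γ)) ^ 2 - ε * ((ε - D) / (2 * γ)) + 1 = 0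
    field_simp
    nlinarith [hD2]
  refine ⟨heq1, heq2, ?_, ?_⟩
  · rcases le_or_gt 0 ε with hε | hε
    · -- ε ≥ 0 : rp ≥ rm ≥ 1
      have hεγ : 0 ≤ ε - 2 * γ := by nlinarith
      have h1rp : 1 ≤ rp := by
        show 1 ≤ (ε + D) / (2 * γ)
        rw [le_div_iff₀ hγ]; linarith
      exact le_trans h1rp (le_abs_self _)
    · have hεγ : 0 ≤ -ε - 2 * γ := by nlinarith
      have hDle : D ≤ -ε - 2 * γ := by
        have h := Real.sqrt_le_sqrt (show ε ^ 2 - 4 * γ ≤ (-ε - 2 * γ) ^ 2 by nlinarith)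
        rwa [Real.sqrt_sq hεγ] at h
      have h1rp : rp ≤ -1 := by
        show (ε + D) / (2 * γ) ≤ -1
        rw [div_le_iff₀ hγ]; linarith
      refine le_trans ?_ (neg_le_abs _)
      linarith
  · rcases le_or_gt 0 ε with hε | hε
    · have hεγ : 0 ≤ ε - 2 * γ := by nlinarith
      have hDle : D ≤ ε - 2 * γ := by
        have h := Real.sqrt_le_sqrt (show ε ^ 2 - 4 * γ ≤ (ε - 2 * γ) ^ 2 by nlinarith)
        rwa [Real.sqrt_sq hεγ] at h
      have h1rm : 1 ≤ rm := by
        show 1 ≤ (ε - D) / (2 * γ)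
        rw [le_div_iff₀ hγ]; linarith
      exact le_trans h1rm (le_abs_self _)
    · have hεγ : 0 ≤ -ε - 2 * γ := by nlinarith
      have h1rm : rm ≤ -1 := by
        show (ε - D) / (2 * γ) ≤ -1
        rw [div_le_iff₀ hγ]; linarith
      refine le_trans ?_ (neg_le_abs _)
      linarith
end

section
/- Let γ, c ∈ ℝ with −1 ≤ γ < 0 and |c| ≤ 1, and set ε := c·(1 + γ). Then ε² − 4γ > 0 and both real roots r_± := (ε ± √(ε² − 4γ))/(2γ) of the characteristic equation γ·t² − ε·t + 1 = 0 satisfy |r_±| ≥ 1. -/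
/-- For `−1 ≤ γ < 0`, `|c| ≤ 1` and `ε = c(1+γ)`, one has `ε² − 4γ > 0`, and both real
roots `r_± = (ε ± √(ε²−4γ))/(2γ)` of the characteristic equation `γt² − εt + 1 = 0`
satisfy `|r_±| ≥ 1`. -/
theorem roots_modulus_ge_one_neg_gamma (γ c : ℝ) (h0 : -1 ≤ γ) (h1 : γ < 0)
    (hc : |c| ≤ 1) :
    let ε := c * (1 + γ)
    ε ^ 2 - 4 * γ > 0 ∧
    (let rp := (ε + Real.sqrt (ε ^ 2 - 4 * γ)) / (2 * γ)
     let rm := (ε - Real.sqrt (ε ^ 2 - 4 * γ)) / (2 * γ)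
     (γ * rp ^ 2 - ε * rp + 1 = 0) ∧ (γ * rm ^ 2 - ε * rm + 1 = 0) ∧
     1 ≤ |rp| ∧ 1 ≤ |rm|) := by
  intro ε
  obtain ⟨hc1, hc2⟩ := abs_le.mp hc
  have hε : ε = c * (1 + γ) := rfl
  have hD : ε ^ 2 - 4 * γ > 0 := by nlinarith [sq_nonneg ε]
  refine ⟨hD, ?_⟩
  intro rp rm
  set s := Real.sqrt (ε ^ 2 - 4 * γ) with hsdef
  have hs0 : 0 ≤ s := Real.sqrt_nonneg _
  have hs2 : s ^ 2 = ε ^ 2 - 4 * γ := Real.sq_sqrt hD.le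
  have hγ : γ ≠ 0 := ne_of_lt h1
  have hg1 : 0 ≤ 1 + γ := by linarith
  have hrootp : γ * rp ^ 2 - ε * rp + 1 = 0 := by
    show γ * ((ε + s) / (2 * γ)) ^ 2 - ε * ((ε + s) / (2 * γ)) + 1 = 0
    field_simp
    nlinarith [hs2]
  have hrootm : γ * rm ^ 2 - ε * rm + 1 = 0 := by
    show γ * ((ε - s) / (2 * γ)) ^ 2 - ε * ((ε - s) / (2 * γ)) + 1 = 0
    field_simp
    nlinarith [hs2]
  have hfact1 : 0 ≤ -4 * γ * (1 + γ) * (1 + c) := by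
    have : 0 ≤ (1 + γ) * (1 + c) := mul_nonneg hg1 (by linarith)
    nlinarith
  have hfact2 : 0 ≤ -4 * γ * (1 + γ) * (1 - c) := by
    have : 0 ≤ (1 + γ) * (1 - c) := mul_nonneg hg1 (by linarith)
    nlinarith
  -- s ≥ -(ε + 2γ)
  have hp : s + ε + 2 * γ ≥ 0 := by
    by_contra h
    push_neg at h
    have h2 : 0 < s - ε - 2 * γ := by linarith
    nlinarith [hs2, hfact1, hs0, hε, mul_pos (show (0:ℝ) < -(s + ε + 2*γ) by linarith) h2]
  -- s ≥ ε - 2γ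
  have hm : s - ε + 2 * γ ≥ 0 := by
    by_contra h
    push_neg at h
    have h2 : 0 < s + ε - 2 * γ := by linarith
    nlinarith [hs2, hfact2, hs0, hε, mul_pos (show (0:ℝ) < -(s - ε + 2*γ) by linarith) h2]
  have hrp : rp ≤ -1 := by
    show (ε + s) / (2 * γ) ≤ -1
    rw [div_le_iff_of_neg (by linarith : 2 * γ < 0)]
    linarith
  have hrm : 1 ≤ rm := by
    show 1 ≤ (ε - s) / (2 * γ)
    rw [le_div_iff_of_neg (by linarith : 2 * γ < 0)]
    linarith
  exact ⟨hrootp, hrootm, by rw [abs_of_nonpos (by linarith)]; linarith,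
    by rw [abs_of_nonneg (by linarith)]; linarith⟩
end

section
/- Let γ, ε ∈ ℝ with γ ≠ 0, and assume that every complex root r of the polynomial γ·t² − ε·t + 1 satisfies |r| ≥ 1. If y : ℕ → ℂ is square-summable (∑_{n} |y_n|² < ∞) and satisfies the linear recurrence γ·y_{n+2} − ε·y_{n+1} + y_n = 0 for all n ∈ ℕ, then y_n = 0 for all n. -/
/-!
Factor the characteristic polynomial as `γ (t - r₁) (t - r₂)`. Then `z n = y (n + 1) - r₂ y n`
is geometric with ratio `r₁`, and a geometric sequence with ratio of modulus `≥ 1` has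
nondecreasing norms, so it can only tend to `0` if it vanishes. As `y → 0`, also `z → 0`;
hence `z = 0`, so `y` itself is geometric with ratio `r₂` and vanishes for the same reason.
-/

open Filter Topology

theorem tendsto_zero_of_summable_norm_sq {E : Type*} [SeminormedAddCommGroup E] {y : ℕ → E}
    (hsum : Summable fun n => ‖y n‖ ^ 2) : Tendsto y atTop (𝓝 0) := by
  rw [tendsto_zero_iff_norm_tendsto_zero]
  simpa using hsum.tendsto_atTop_zero.sqrt

theorem eq_zero_of_succ_eq_smul_of_tendsto_zero {𝕜 E : Type*} [NormedField 𝕜]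
    [NormedAddCommGroup E] [NormedSpace 𝕜 E] {r : 𝕜} (hr : 1 ≤ ‖r‖) {w : ℕ → E}
    (hstep : ∀ n, w (n + 1) = r • w n) (hw : Tendsto w atTop (𝓝 0)) (n : ℕ) : w n = 0 := by
  have hmono : Monotone fun n => ‖w n‖ := monotone_nat_of_le_succ fun n => by
    rw [hstep, norm_smul]
    exact le_mul_of_one_le_left (norm_nonneg _) hr
  exact norm_le_zero_iff.mp (hmono.ge_of_tendsto (by simpa using hw.norm) n)

theorem exists_vieta_of_isSepClosed {K : Type*} [Field K] [IsSepClosed K] [NeZero (2 : K)]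
    {a b c : K} (ha : a ≠ 0) : ∃ r₁ r₂ : K, a * (r₁ + r₂) = b ∧ a * (r₁ * r₂) = c := by
  obtain ⟨r₁, hr₁⟩ :=
    exists_quadratic_eq_zero ha (IsSepClosed.exists_eq_mul_self (discrim a (-b) c))
  refine ⟨r₁, b / a - r₁, by field_simp; ring, ?_⟩
  field_simp
  linear_combination -hr₁

theorem succ_sub_mul_eq_mul_of_recurrence {K : Type*} [Field K] {a b c r₁ r₂ : K}
    {y : ℕ → K} (ha : a ≠ 0) (hsum : a * (r₁ + r₂) = b)
    (hprod : a * (r₁ * r₂) = c) (hrec : ∀ n, a * y (n + 2) - b * y (n + 1) + c * y n = 0)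
    (n : ℕ) : y (n + 2) - r₂ * y (n + 1) = r₁ * (y (n + 1) - r₂ * y n) :=
  mul_left_cancel₀ ha <| by linear_combination hrec n - y (n + 1) * hsum + y n * hprod

theorem eq_zero_of_recurrence_of_tendsto_zero {K : Type*} [NormedField K] {a b c r₁ r₂ : K}
    {y : ℕ → K} (ha : a ≠ 0) (hsum : a * (r₁ + r₂) = b) (hprod : a * (r₁ * r₂) = c)
    (hr₁ : 1 ≤ ‖r₁‖) (hr₂ : 1 ≤ ‖r₂‖)
    (hrec : ∀ n, a * y (n + 2) - b * y (n + 1) + c * y n = 0)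
    (hy : Tendsto y atTop (𝓝 0)) (n : ℕ) : y n = 0 := by
  have hz : ∀ n, y (n + 1) - r₂ * y n = 0 := by
    refine eq_zero_of_succ_eq_smul_of_tendsto_zero hr₁
      (succ_sub_mul_eq_mul_of_recurrence ha hsum hprod hrec) ?_
    simpa using (hy.comp (tendsto_add_atTop_nat 1)).sub (hy.const_mul r₂)
  exact eq_zero_of_succ_eq_smul_of_tendsto_zero hr₂ (fun n => sub_eq_zero.mp (hz n)) hy n

/-- If every complex root of `γt² − εt + 1` has modulus at least `1` (with `γ ≠ 0`), then
every square-summable solution of the recurrence `γ·y_{n+2} − ε·y_{n+1} + y_n = 0`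
vanishes identically. -/
theorem square_summable_recurrence_solution_eq_zero (γ ε : ℝ) (hγ : γ ≠ 0)
    (hroots : ∀ r : ℂ, (γ : ℂ) * r ^ 2 - (ε : ℂ) * r + 1 = 0 → 1 ≤ ‖r‖)
    (y : ℕ → ℂ) (hsum : Summable fun n => ‖y n‖ ^ 2)
    (hrec : ∀ n : ℕ, (γ : ℂ) * y (n + 2) - (ε : ℂ) * y (n + 1) + y n = 0) :
    ∀ n, y n = 0 := by
  have hγ' : (γ : ℂ) ≠ 0 := by exact_mod_cast hγ
  obtain ⟨r₁, r₂, hsum₁₂, hprod₁₂⟩ := exists_vieta_of_isSepClosed (b := (ε : ℂ)) (c := 1) hγ'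
  have hr₁ : 1 ≤ ‖r₁‖ := hroots r₁ (by linear_combination r₁ * hsum₁₂ - hprod₁₂)
  have hr₂ : 1 ≤ ‖r₂‖ := hroots r₂ (by linear_combination r₂ * hsum₁₂ - hprod₁₂)
  exact eq_zero_of_recurrence_of_tendsto_zero hγ' hsum₁₂ hprod₁₂ hr₁ hr₂
    (fun n => by linear_combination hrec n) (tendsto_zero_of_summable_norm_sq hsum)
end

section
/- Let λ ∈ ℂ with sin(√2·|λ|) ≠ 0 (in particular λ ≠ 0 and √2|λ| ∉ πℤ) and let p ∈ ℝ with sin(2p) ≠ 0. Set γ := cos(√2|λ|), ε := cos(2p)·(γ + 1), and σ := −i·conj(λ)·sin(√2|λ|)/(√2|λ|). Suppose x : ℤ → ℂ is square-summable (∑_{n∈ℤ} |x_n|² < ∞) and satisfies: (i) γ·x_{n−1} − ε·x_n + x_{n+1} = 0 for all n ≤ −1; (ii) γ·x_{−1} − ε·x_0 + σ·e^{−2ip}·x_1 + σ·e^{2ip}·x_2 + γ·x_3 = 0; (iii) γ·x_0 − σ·x_1 − σ·x_2 − ε·x_3 + γ·x_4 = 0; (iv) x_{n−1} − ε·x_n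 + γ·x_{n+1} = 0 for all n ≥ 4. Then x_n = 0 for all n ∈ ℤ. -/
/-!
On each tail, `x` satisfies a constant-coefficient recurrence with characteristic polynomial
`z² - εz + γ`. Since `|γ| ≤ 1` and `|ε| ≤ 1 + γ`, both roots lie in the closed unit disc. Factoring
the recurrence through the roots leaves first-order recurrences `y (n + 1) = r * y n` with
`‖r‖ ≤ 1`. Along such a recurrence `‖y‖` can only grow towards `-∞`, but square-summability makes
`x` decay at both ends, so both tails vanish. The two remaining equations then form a `2 × 2`
system for `x 1`, `x 2` with determinant `σ² (e^{-2ip} - e^{2ip}) = -2iσ² sin 2p`, which vanishes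
only if `σ = 0` or `sin 2p = 0`.
-/
open Filter Topology

theorem tendsto_cofinite_zero_of_summable_norm_sq {α E : Type*} [SeminormedAddGroup E]
    {f : α → E} (hf : Summable fun a => ‖f a‖ ^ 2) : Tendsto f cofinite (𝓝 0) := by
  rw [tendsto_zero_iff_norm_tendsto_zero]
  simpa using hf.tendsto_cofinite_zero.sqrt

section NormedField

variable {𝕜 : Type*} [NormedField 𝕜]

theorem eq_zero_of_tendsto_atBot_of_eq_mul {y : ℤ → 𝕜} {r : 𝕜} (hr : ‖r‖ ≤ 1)
    (hy : Tendsto y atBot (𝓝 0)) (hrec : ∀ n ≤ -1, y (n + 1) = r * y n) :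
    ∀ m ≤ 0, y m = 0 := by
  intro m hm
  have hpow : ∀ k : ℕ, y m = r ^ k * y (m - k) := by
    intro k
    induction k with
    | zero => simp
    | succ k ih =>
      have h := hrec (m - k - 1) (by omega)
      rw [sub_add_cancel] at h
      rw [ih, h, pow_succ, mul_assoc, Nat.cast_succ, sub_add_eq_sub_sub]
  have hle : ∀ k : ℕ, ‖y m‖ ≤ ‖y (m - k)‖ := fun k => by
    rw [hpow k, norm_mul, norm_pow]
    exact mul_le_of_le_one_left (norm_nonneg _) (pow_le_one₀ (norm_nonneg _) hr)
  have hlim : Tendsto (fun k : ℕ => ‖y (m - k)‖) atTop (𝓝 0) :=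
    (tendsto_zero_iff_norm_tendsto_zero.1 hy).comp
      ((tendsto_atBot_add_const_left _ m tendsto_neg_atTop_atBot).comp tendsto_natCast_atTop_atTop)
  exact norm_le_zero_iff.1 (ge_of_tendsto' hlim hle)

theorem eq_zero_of_tendsto_atBot_of_factored_recurrence {x : ℤ → 𝕜} {r s : 𝕜} (hr : ‖r‖ ≤ 1)
    (hs : ‖s‖ ≤ 1) (hx : Tendsto x atBot (𝓝 0))
    (hrec : ∀ n ≤ -1, r * s * x (n - 1) - (r + s) * x n + x (n + 1) = 0) :
    ∀ m ≤ 0, x m = 0 := by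
  set y : ℤ → 𝕜 := fun n => x n - r * x (n - 1)
  have hy : Tendsto y atBot (𝓝 0) := by
    have hshift := hx.comp (tendsto_atBot_add_const_right _ (-1) tendsto_id)
    simpa [y, sub_eq_add_neg] using hx.sub (hshift.const_mul r)
  have hy0 := eq_zero_of_tendsto_atBot_of_eq_mul hs hy fun n hn => by
    simp only [y, add_sub_cancel_right]
    linear_combination hrec n hn
  refine eq_zero_of_tendsto_atBot_of_eq_mul hr hx fun n hn => ?_
  have := hy0 (n + 1) (by omega)
  simp only [y, add_sub_cancel_right] at this
  linear_combination this

end NormedField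

theorem Complex.exists_add_eq_and_mul_eq (a b : ℂ) : ∃ r s : ℂ, r + s = a ∧ r * s = b := by
  obtain ⟨d, hd⟩ := IsAlgClosed.exists_eq_mul_self (a ^ 2 - 4 * b)
  exact ⟨(a + d) / 2, (a - d) / 2, by ring, by linear_combination hd / 4⟩

theorem Complex.norm_le_one_of_add_eq_of_mul_eq {r s : ℂ} {a b : ℝ} (hsum : r + s = a)
    (hprod : r * s = b) (hb : |b| ≤ 1) (ha : |a| ≤ 1 + b) : ‖r‖ ≤ 1 := by
  by_contra! hr
  have hs : ‖s‖ < 1 := by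
    have : ‖r‖ * ‖s‖ = |b| := by rw [← norm_mul, hprod, Complex.norm_real, Real.norm_eq_abs]
    nlinarith [norm_nonneg s]
  have hre := congrArg Complex.re hsum
  have him := congrArg Complex.im hsum
  have hre' := congrArg Complex.re hprod
  have him' := congrArg Complex.im hprod
  simp only [Complex.add_re, Complex.add_im, Complex.mul_re, Complex.mul_im, Complex.ofReal_re,
    Complex.ofReal_im] at hre him hre' him'
  rcases eq_or_ne r.im 0 with hr0 | hr0
  · have hs0 : s.im = 0 := by linarith
    rw [← Complex.re_add_im r, hr0, Complex.ofReal_zero, zero_mul, add_zero, Complex.norm_real,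
      Real.norm_eq_abs] at hr
    rw [← Complex.re_add_im s, hs0, Complex.ofReal_zero, zero_mul, add_zero, Complex.norm_real,
      Real.norm_eq_abs] at hs
    rw [hr0, hs0] at hre'
    -- `(1 - r) (1 - s) = 1 - a + b ≥ 0` and `(1 + r) (1 + s) = 1 + a + b ≥ 0`, with `|s| < 1`
    obtain ⟨ha₁, ha₂⟩ := abs_le.1 ha
    obtain ⟨hs₁, hs₂⟩ := abs_lt.1 hs
    have : |r.re| ≤ 1 := abs_le.2 ⟨by nlinarith, by nlinarith⟩
    linarith
  · -- a non-real root pairs with its conjugate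
    have hconj : s = (starRingEnd ℂ) r := by
      apply Complex.ext
      · simp only [Complex.conj_re]
        apply mul_left_cancel₀ hr0
        linear_combination him' - r.re * him
      · simp only [Complex.conj_im]
        linarith
    rw [hconj, Complex.norm_conj] at hs
    linarith

theorem Complex.exp_neg_mul_I_ne_exp_mul_I {z : ℂ} (hz : Complex.sin z ≠ 0) :
    Complex.exp (-z * Complex.I) ≠ Complex.exp (z * Complex.I) := by
  rw [← sub_ne_zero]
  have : Complex.exp (-z * Complex.I) - Complex.exp (z * Complex.I) =
      -2 * Complex.I * Complex.sin z := by
    linear_combination Complex.I * Complex.two_sin z +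
      (Complex.exp (-z * Complex.I) - Complex.exp (z * Complex.I)) * Complex.I_sq
  rw [this]
  exact mul_ne_zero (mul_ne_zero (by norm_num) Complex.I_ne_zero) hz

theorem Complex.eq_zero_of_tendsto_atBot_of_recurrence {x : ℤ → ℂ} {a b : ℝ} (hb : |b| ≤ 1)
    (ha : |a| ≤ 1 + b) (hx : Tendsto x atBot (𝓝 0))
    (hrec : ∀ n ≤ -1, (b : ℂ) * x (n - 1) - a * x n + x (n + 1) = 0) :
    ∀ m ≤ 0, x m = 0 := by
  obtain ⟨r, s, hsum, hprod⟩ := Complex.exists_add_eq_and_mul_eq a b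
  refine eq_zero_of_tendsto_atBot_of_factored_recurrence
    (norm_le_one_of_add_eq_of_mul_eq hsum hprod hb ha)
    (norm_le_one_of_add_eq_of_mul_eq ((add_comm s r).trans hsum) ((mul_comm s r).trans hprod) hb ha)
    hx ?_
  simpa only [hsum, hprod] using hrec

theorem Complex.eq_zero_of_tendsto_atTop_of_recurrence {x : ℤ → ℂ} {a b : ℝ} (hb : |b| ≤ 1)
    (ha : |a| ≤ 1 + b) (hx : Tendsto x atTop (𝓝 0)) (N : ℤ)
    (hrec : ∀ n, N < n → x (n - 1) - a * x n + b * x (n + 1) = 0) :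
    ∀ m, N ≤ m → x m = 0 := by
  have hreflect := eq_zero_of_tendsto_atBot_of_recurrence hb ha (x := fun n => x (N - n))
    (hx.comp (tendsto_atTop_add_const_left _ N tendsto_neg_atBot_atTop)) fun n hn => by
      have h := hrec (N - n) (by omega)
      rw [show N - n - 1 = N - (n + 1) by ring, show N - n + 1 = N - (n - 1) by ring] at h
      linear_combination h
  intro m hm
  simpa using hreflect (N - m) (by omega)

/-- Completeness of the scattering eigenstates in the generic case: for coupling constant
`λ` with `sin(√2|λ|) ≠ 0` and total momentum `p` with `sin(2p) ≠ 0`, any square-summable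
sequence `x : ℤ → ℂ` satisfying the linear system (i)–(iv) (with `γ = cos(√2|λ|)`,
`ε = cos(2p)(γ+1)` and `σ = −i·conj(λ)·sin(√2|λ|)/(√2|λ|)`) vanishes identically. -/
theorem scattering_states_completeness (l : ℂ) (p : ℝ)
    (hl : Real.sin (Real.sqrt 2 * ‖l‖) ≠ 0)
    (hp : Real.sin (2 * p) ≠ 0)
    (x : ℤ → ℂ) (hsum : Summable fun n : ℤ => ‖x n‖ ^ 2) :
    let γ : ℝ := Real.cos (Real.sqrt 2 * ‖l‖)
    let ε : ℝ := Real.cos (2 * p) * (γ + 1)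
    let σ : ℂ := -(Complex.I * (starRingEnd ℂ) l
        * (Real.sin (Real.sqrt 2 * ‖l‖) : ℂ))
      / ((Real.sqrt 2 * ‖l‖ : ℝ) : ℂ)
    (∀ n : ℤ, n ≤ -1 → (γ : ℂ) * x (n - 1) - (ε : ℂ) * x n + x (n + 1) = 0) →
    ((γ : ℂ) * x (-1) - (ε : ℂ) * x 0
        + σ * Complex.exp (-(2 * p) * Complex.I) * x 1
        + σ * Complex.exp (2 * p * Complex.I) * x 2
        + (γ : ℂ) * x 3 = 0) →
    ((γ : ℂ) * x 0 - σ * x 1 - σ * x 2 - (ε : ℂ) * x 3 + (γ : ℂ) * x 4 = 0) →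
    (∀ n : ℤ, 4 ≤ n → x (n - 1) - (ε : ℂ) * x n + (γ : ℂ) * x (n + 1) = 0) →
    ∀ n : ℤ, x n = 0 := by
  intro γ ε σ hneg h0 h3 hpos
  have hγ : |γ| ≤ 1 := Real.abs_cos_le_one _
  have hε : |ε| ≤ 1 + γ := by
    have hγ1 : 0 ≤ γ + 1 := by linarith [neg_abs_le γ]
    rw [abs_mul, abs_of_nonneg hγ1, add_comm 1 γ]
    exact mul_le_of_le_one_left hγ1 (Real.abs_cos_le_one _)
  have hx := tendsto_cofinite_zero_of_summable_norm_sq hsum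
  rw [Int.cofinite_eq, tendsto_sup] at hx
  have hleft := Complex.eq_zero_of_tendsto_atBot_of_recurrence hγ hε hx.1 hneg
  have hright := Complex.eq_zero_of_tendsto_atTop_of_recurrence hγ hε hx.2 3 hpos
  have hθ : Real.sqrt 2 * ‖l‖ ≠ 0 := fun h => hl (by rw [h, Real.sin_zero])
  have hσ : σ ≠ 0 := div_ne_zero (neg_ne_zero.2 (mul_ne_zero (mul_ne_zero Complex.I_ne_zero
    ((map_ne_zero _).2 (by rintro rfl; simp at hθ))) (Complex.ofReal_ne_zero.2 hl)))
    (Complex.ofReal_ne_zero.2 hθ)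
  have hexp := Complex.exp_neg_mul_I_ne_exp_mul_I (z := 2 * p) (by exact_mod_cast hp)
  have h12 : x 1 + x 2 = 0 := by
    refine (mul_eq_zero.1 ?_).resolve_left hσ
    linear_combination -h3 + γ * hleft 0 le_rfl - ε * hright 3 le_rfl + γ * hright 4 (by norm_num)
  have h1 : x 1 = 0 := by
    refine (mul_eq_zero.1 ?_).resolve_left (mul_ne_zero hσ (sub_ne_zero.2 hexp))
    linear_combination h0 - γ * hleft (-1) (by norm_num) + ε * hleft 0 le_rfl
      - γ * hright 3 le_rfl - σ * Complex.exp (2 * p * Complex.I) * h12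
  intro n
  rcases (by omega : n ≤ 0 ∨ n = 1 ∨ n = 2 ∨ 3 ≤ n) with h | rfl | rfl | h
  · exact hleft n h
  · exact h1
  · linear_combination h12 - h1
  · exact hright n h
end
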